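/- arXiv:2009.00159 — 4 statements merged into one kernel-verified Lean document; each statement's English description precedes it below -/
import Mathlib

section
/- Let n ≥ 1 and let Φ : Matrix (Fin n) (Fin n) ℂ →ₗ[ℂ] Matrix (Fin n) (Fin n) ℂ be a linear map. Then Φ is completely positive and trace preserving if and only if there exists a finite family of matrices K₁, …, K_r ∈ Matrix (Fin n) (Fin n) ℂ with Σ_i K_iᴴ * K_i = 1 such that Φ(X) = Σ_i K_i * X * K_iᴴ for every X (a Kraus representation). -/
open scoped Kronecker ComplexOrder Matrix

noncomputable section

/-- The block of `M` at position `(a, b)` when `M` is viewed as a block matrix indexed by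
`Fin k × Fin n`. -/
def blockAt {k n : ℕ} (M : Matrix (Fin k × Fin n) (Fin k × Fin n) ℂ) (a b : Fin k) :
    Matrix (Fin n) (Fin n) ℂ :=
  Matrix.of fun i j => M (a, i) (b, j)

/-- The extension `id_k ⊗ Φ` of a linear map `Φ` acting blockwise on block matrices. -/
def matExtend {n m : ℕ} (k : ℕ) (Φ : Matrix (Fin n) (Fin n) ℂ →ₗ[ℂ] Matrix (Fin m) (Fin m) ℂ)
    (M : Matrix (Fin k × Fin n) (Fin k × Fin n) ℂ) :
    Matrix (Fin k × Fin m) (Fin k × Fin m) ℂ :=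
  ∑ a : Fin k, ∑ b : Fin k,
    (Matrix.single a b (1 : ℂ)) ⊗ₖ Φ (blockAt M a b)

/-- A linear map on matrices is completely positive if all its extensions `id_k ⊗ Φ`
map positive semidefinite matrices to positive semidefinite matrices. -/
def IsCompletelyPositive {n m : ℕ}
    (Φ : Matrix (Fin n) (Fin n) ℂ →ₗ[ℂ] Matrix (Fin m) (Fin m) ℂ) : Prop :=
  ∀ k : ℕ, 1 ≤ k → ∀ M : Matrix (Fin k × Fin n) (Fin k × Fin n) ℂ,
    M.PosSemidef → (matExtend k Φ M).PosSemidef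

/-- A linear map on matrices is trace preserving if it leaves the trace invariant. -/
def IsTracePreserving {n : ℕ}
    (Φ : Matrix (Fin n) (Fin n) ℂ →ₗ[ℂ] Matrix (Fin n) (Fin n) ℂ) : Prop :=
  ∀ X, (Φ X).trace = X.trace

/-!
A linear map `Φ` is determined by its Choi matrix `C = ∑ a b, E a b ⊗ Φ (E a b)`, which is the
image under `id_n ⊗ Φ` of the projection onto the maximally entangled vector `∑ a, e a ⊗ e a`;
so complete positivity makes `C` positive semidefinite. Writing `C = Sᴴ * S`, the rows of `S`,
reshaped into matrices, are Kraus operators of `Φ`, and by cyclicity of the trace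
`X ↦ ∑ K X Kᴴ` preserves traces exactly when `∑ Kᴴ K = 1`. Conversely, `id_k ⊗ (X ↦ ∑ K X Kᴴ)`
is `M ↦ ∑ (1 ⊗ K) M (1 ⊗ K)ᴴ`, which preserves positive semidefiniteness.
-/

open Matrix

section Kraus

variable {ι κ ρ ρ' : Type*} [Fintype ι] [Fintype ρ] [Fintype ρ']

def krausMap (K : ρ → Matrix κ ι ℂ) : Matrix ι ι ℂ →ₗ[ℂ] Matrix κ κ ℂ where
  toFun X := ∑ t, K t * X * (K t)ᴴ
  map_add' X Y := by simp only [Matrix.mul_add, Matrix.add_mul, Finset.sum_add_distrib]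
  map_smul' c X := by simp only [Matrix.mul_smul, Matrix.smul_mul, Finset.smul_sum,
    RingHom.id_apply]

@[simp]
lemma krausMap_apply (K : ρ → Matrix κ ι ℂ) (X : Matrix ι ι ℂ) :
    krausMap K X = ∑ t, K t * X * (K t)ᴴ :=
  rfl

lemma krausMap_comp_equiv (K : ρ → Matrix κ ι ℂ) (e : ρ' ≃ ρ) :
    krausMap (K ∘ e) = krausMap K :=
  LinearMap.ext fun X => Equiv.sum_comp e fun t => K t * X * (K t)ᴴ

lemma trace_krausMap [Fintype κ] (K : ρ → Matrix κ ι ℂ) (X : Matrix ι ι ℂ) :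
    (krausMap K X).trace = ((∑ t, (K t)ᴴ * K t) * X).trace := by
  simp only [krausMap_apply, trace_sum, Finset.sum_mul]
  refine Finset.sum_congr rfl fun t _ => ?_
  rw [trace_mul_cycle, Matrix.mul_assoc]

lemma isTracePreserving_krausMap_iff {n : ℕ} {K : ρ → Matrix (Fin n) (Fin n) ℂ} :
    IsTracePreserving (krausMap K) ↔ ∑ t, (K t)ᴴ * K t = 1 := by
  refine ⟨fun h => ?_, fun h X => by rw [trace_krausMap, h, Matrix.one_mul]⟩
  ext a b
  have hab :
      ((∑ t, (K t)ᴴ * K t) * single b a 1).trace = (1 * single b a (1 : ℂ)).trace := by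
    rw [← trace_krausMap, h, Matrix.one_mul]
  simpa only [trace_mul_single, MulOpposite.op_one, one_smul] using hab

end Kraus

section Choi

variable {ι κ ρ : Type*} [Fintype ι] [DecidableEq ι]

def choiMatrix (Φ : Matrix ι ι ℂ →ₗ[ℂ] Matrix κ κ ℂ) : Matrix (ι × κ) (ι × κ) ℂ :=
  Matrix.of fun p q => Φ (single p.1 q.1 1) p.2 q.2

lemma choiMatrix_injective :
    Function.Injective (choiMatrix : (Matrix ι ι ℂ →ₗ[ℂ] Matrix κ κ ℂ) → _) := by
  intro Φ Ψ h
  refine (stdBasis ℂ ι ι).ext fun ab => ?_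
  ext i j
  rw [stdBasis_eq_single]
  exact congr_fun₂ h (ab.1, i) (ab.2, j)

lemma choiMatrix_krausMap_apply [Fintype ρ] (K : ρ → Matrix κ ι ℂ) (a b : ι) (i j : κ) :
    choiMatrix (krausMap K) (a, i) (b, j) = ∑ t, K t i a * star (K t j b) := by
  simp [choiMatrix, Matrix.sum_apply, mul_apply, single, ite_and]

lemma eq_krausMap_of_choiMatrix_eq_conjTranspose_mul_self [Fintype ρ]
    {Φ : Matrix ι ι ℂ →ₗ[ℂ] Matrix κ κ ℂ} {S : Matrix ρ (ι × κ) ℂ} (hS : choiMatrix Φ = Sᴴ * S) :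
    Φ = krausMap fun t => Matrix.of fun i a => star (S t (a, i)) := by
  refine choiMatrix_injective (Matrix.ext fun ⟨a, i⟩ ⟨b, j⟩ => ?_)
  simp [choiMatrix_krausMap_apply, hS, mul_apply, mul_comm]

open scoped Matrix.Norms.L2Operator MatrixOrder in
lemma exists_krausMap_eq_of_posSemidef_choiMatrix [Fintype κ] [DecidableEq κ]
    {Φ : Matrix ι ι ℂ →ₗ[ℂ] Matrix κ κ ℂ} (hΦ : (choiMatrix Φ).PosSemidef) :
    ∃ K : ι × κ → Matrix κ ι ℂ, Φ = krausMap K := by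
  obtain ⟨S, hS⟩ := CStarAlgebra.nonneg_iff_eq_star_mul_self.mp hΦ.nonneg
  exact ⟨_, eq_krausMap_of_choiMatrix_eq_conjTranspose_mul_self hS⟩

end Choi

section CompletelyPositive

variable {n m : ℕ} {ρ : Type*} [Fintype ρ]

lemma matExtend_apply (k : ℕ) (Φ : Matrix (Fin n) (Fin n) ℂ →ₗ[ℂ] Matrix (Fin m) (Fin m) ℂ)
    (M : Matrix (Fin k × Fin n) (Fin k × Fin n) ℂ) (a b : Fin k) (i j : Fin m) :
    matExtend k Φ M (a, i) (b, j) = Φ (blockAt M a b) i j := by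
  simp [matExtend, Matrix.sum_apply, kroneckerMap_apply, single, ite_and]

def maxEntangledVec (n : ℕ) : Fin n × Fin n → ℂ :=
  fun p => if p.1 = p.2 then 1 else 0

lemma blockAt_vecMulVec_maxEntangledVec (a b : Fin n) :
    blockAt (vecMulVec (maxEntangledVec n) (star (maxEntangledVec n))) a b = single a b 1 := by
  ext i j
  simp only [blockAt, maxEntangledVec, vecMulVec_apply, single, of_apply, Pi.star_apply]
  by_cases a = i <;> by_cases b = j <;> simp_all

lemma matExtend_vecMulVec_maxEntangledVec
    (Φ : Matrix (Fin n) (Fin n) ℂ →ₗ[ℂ] Matrix (Fin m) (Fin m) ℂ) :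
    matExtend n Φ (vecMulVec (maxEntangledVec n) (star (maxEntangledVec n))) = choiMatrix Φ := by
  ext ⟨a, i⟩ ⟨b, j⟩
  rw [matExtend_apply, blockAt_vecMulVec_maxEntangledVec]
  rfl

lemma IsCompletelyPositive.posSemidef_choiMatrix
    {Φ : Matrix (Fin n) (Fin n) ℂ →ₗ[ℂ] Matrix (Fin m) (Fin m) ℂ} (hΦ : IsCompletelyPositive Φ) :
    (choiMatrix Φ).PosSemidef := by
  rcases Nat.eq_zero_or_pos n with rfl | hn
  · rw [Subsingleton.elim (choiMatrix Φ) 0]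
    exact .zero
  · rw [← matExtend_vecMulVec_maxEntangledVec]
    exact hΦ n hn _ (posSemidef_vecMulVec_self_star _)

lemma matExtend_krausMap (k : ℕ) (K : ρ → Matrix (Fin m) (Fin n) ℂ)
    (M : Matrix (Fin k × Fin n) (Fin k × Fin n) ℂ) :
    matExtend k (krausMap K) M =
      ∑ t, ((1 : Matrix (Fin k) (Fin k) ℂ) ⊗ₖ K t) * M *
        ((1 : Matrix (Fin k) (Fin k) ℂ) ⊗ₖ K t)ᴴ := by
  ext ⟨a, i⟩ ⟨b, j⟩
  rw [matExtend_apply, krausMap_apply, Matrix.sum_apply, Matrix.sum_apply]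
  refine Finset.sum_congr rfl fun t _ => ?_
  simp [mul_apply, Fintype.sum_prod_type, one_apply, blockAt, ite_mul, mul_ite, Finset.sum_mul,
    apply_ite (starRingEnd ℂ)]

lemma isCompletelyPositive_krausMap (K : ρ → Matrix (Fin m) (Fin n) ℂ) :
    IsCompletelyPositive (krausMap K) := fun k _ M hM => by
  rw [matExtend_krausMap]
  exact Finset.sum_induction _ _ (fun _ _ => .add) .zero fun t _ =>
    hM.mul_mul_conjTranspose_same _

end CompletelyPositive

theorem cptp_iff_kraus_general (n : ℕ)
    (Φ : Matrix (Fin n) (Fin n) ℂ →ₗ[ℂ] Matrix (Fin n) (Fin n) ℂ) :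
    (IsCompletelyPositive Φ ∧ IsTracePreserving Φ) ↔
      ∃ (r : ℕ) (K : Fin r → Matrix (Fin n) (Fin n) ℂ),
        (∑ i, (K i)ᴴ * K i = 1) ∧ ∀ X, Φ X = ∑ i, K i * X * (K i)ᴴ := by
  constructor
  · rintro ⟨hCP, hTP⟩
    obtain ⟨K, rfl⟩ := exists_krausMap_eq_of_posSemidef_choiMatrix hCP.posSemidef_choiMatrix
    rw [← krausMap_comp_equiv K finProdFinEquiv.symm] at hTP ⊢
    exact ⟨n * n, _, isTracePreserving_krausMap_iff.1 hTP, fun X => rfl⟩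
  · rintro ⟨r, K, hK, hΦ⟩
    obtain rfl : Φ = krausMap K := LinearMap.ext hΦ
    exact ⟨isCompletelyPositive_krausMap K, isTracePreserving_krausMap_iff.2 hK⟩

/-- **Kraus representation.** A linear map on `n × n` complex matrices is a quantum channel
(completely positive and trace preserving) if and only if it admits a Kraus representation. -/
theorem cptp_iff_kraus (n : ℕ) (hn : 1 ≤ n)
    (Φ : Matrix (Fin n) (Fin n) ℂ →ₗ[ℂ] Matrix (Fin n) (Fin n) ℂ) :
    (IsCompletelyPositive Φ ∧ IsTracePreserving Φ) ↔
      ∃ (r : ℕ) (K : Fin r → Matrix (Fin n) (Fin n) ℂ),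
        (∑ i, (K i)ᴴ * K i = 1) ∧ ∀ X, Φ X = ∑ i, K i * X * (K i)ᴴ :=
  cptp_iff_kraus_general n Φ
end
end

section
/- Let n, m ≥ 1, let H be a Hermitian matrix in Matrix ((Fin n) × (Fin m)) ((Fin n) × (Fin m)) ℂ, let ρ_E be a density matrix in Matrix (Fin m) (Fin m) ℂ, and let L be a linear map on Matrix (Fin n) (Fin n) ℂ. If for every t ≥ 0 and every ρ ∈ Matrix (Fin n) (Fin n) ℂ one has exp(t • L)(ρ) = tr₂(exp(−(i t) • H) * (ρ ⊗ₖ ρ_E) * exp((i t) • H)), then there exists a Hermitian matrix H̃ ∈ Matrix (Fin n) (Fin n) ℂ such that L(ρ) = i(ρ*H̃ − H̃*ρ) for all ρ; in particular, for each t ≥ 0 the map exp(t • L) is a unitary conjugation. -/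
/-! Differentiating the hypothesis from the right at `t = 0` identifies the generator:
`L ρ = tr₂ (-i [H, ρ ⊗ ρ_E]) = i (ρ H̃ - H̃ ρ)` with `H̃ = tr₂ (H (1 ⊗ ρ_E))`, which is Hermitian
because `H` and `ρ_E` are. Hence `t • L` is the sum of the commuting operators of left
multiplication by `-i t H̃` and right multiplication by `i t H̃`, so that
`exp (t • L) ρ = U ρ Uᴴ` with the unitary `U = exp (-i t H̃)`. -/

open scoped Kronecker ComplexOrder Matrix

attribute [local instance] Matrix.frobeniusNormedAddCommGroup Matrix.frobeniusNormedSpace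

noncomputable section

/-- The partial trace over the second tensor factor. -/
def ptrace2 {n m : ℕ} (M : Matrix (Fin n × Fin m) (Fin n × Fin m) ℂ) :
    Matrix (Fin n) (Fin n) ℂ :=
  Matrix.of fun i j => ∑ k : Fin m, M (i, k) (j, k)

open NormedSpace
open Complex (I)

section MulLeftRight
variable (𝕜 : Type*) {𝔸 : Type*} [RCLike 𝕜] [NormedRing 𝔸] [NormedAlgebra 𝕜 𝔸]

def ContinuousLinearMap.mulLeftRingHom : 𝔸 →+* (𝔸 →L[𝕜] 𝔸) where
  toFun := ContinuousLinearMap.mul 𝕜 𝔸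
  map_one' := by ext; simp
  map_mul' a b := by ext; simp [mul_assoc]
  map_zero' := by ext; simp
  map_add' a b := by ext; simp

def ContinuousLinearMap.mulRightRingHom : 𝔸ᵐᵒᵖ →+* (𝔸 →L[𝕜] 𝔸) where
  toFun b := (ContinuousLinearMap.mul 𝕜 𝔸).flip b.unop
  map_one' := by ext; simp
  map_mul' a b := by ext; simp [mul_assoc]
  map_zero' := by ext; simp
  map_add' a b := by ext; simp

variable [CompleteSpace 𝔸]

theorem exp_mul_left (a : 𝔸) :
    exp (ContinuousLinearMap.mul 𝕜 𝔸 a) = ContinuousLinearMap.mul 𝕜 𝔸 (exp a) := by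
  let _ := NormedAlgebra.restrictScalars ℚ 𝕜 𝔸
  let _ := NormedAlgebra.restrictScalars ℚ 𝕜 (𝔸 →L[𝕜] 𝔸)
  exact (map_exp (ContinuousLinearMap.mulLeftRingHom 𝕜)
    (ContinuousLinearMap.mul 𝕜 𝔸).continuous a).symm

theorem exp_flip_mul (b : 𝔸) :
    exp ((ContinuousLinearMap.mul 𝕜 𝔸).flip b)
      = (ContinuousLinearMap.mul 𝕜 𝔸).flip (exp b) := by
  let _ := NormedAlgebra.restrictScalars ℚ 𝕜 𝔸
  let _ := NormedAlgebra.restrictScalars ℚ 𝕜 (𝔸 →L[𝕜] 𝔸)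
  have hcont : Continuous (ContinuousLinearMap.mulRightRingHom 𝕜 (𝔸 := 𝔸)) :=
    (ContinuousLinearMap.mul 𝕜 𝔸).flip.continuous.comp MulOpposite.continuous_unop
  have h := map_exp _ hcont (MulOpposite.op b)
  rw [exp_op] at h
  exact h.symm

theorem exp_mul_add_flip_mul_apply (a b x : 𝔸) :
    exp (ContinuousLinearMap.mul 𝕜 𝔸 a + (ContinuousLinearMap.mul 𝕜 𝔸).flip b) x
      = exp a * x * exp b := by
  let _ := NormedAlgebra.restrictScalars ℚ 𝕜 (𝔸 →L[𝕜] 𝔸)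
  have hcomm :
      Commute (ContinuousLinearMap.mul 𝕜 𝔸 a) ((ContinuousLinearMap.mul 𝕜 𝔸).flip b) :=
    ContinuousLinearMap.ext fun x => (mul_assoc a x b).symm
  rw [exp_add_of_commute hcomm, exp_mul_left, exp_flip_mul]
  exact (mul_assoc _ _ _).symm
end MulLeftRight

section Hamiltonian
variable {𝔸 : Type*} [NormedRing 𝔸] [NormedAlgebra ℂ 𝔸]

theorem exp_smul_apply_of_eq_commutator [CompleteSpace 𝔸] {L : 𝔸 →L[ℂ] 𝔸} {K : 𝔸}
    (hL : ∀ x, L x = I • (x * K - K * x)) (z : ℂ) (x : 𝔸) :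
    exp (z • L) x = exp ((-(I * z)) • K) * x * exp ((I * z) • K) := by
  have hdecomp : z • L = ContinuousLinearMap.mul ℂ 𝔸 ((-(I * z)) • K)
      + (ContinuousLinearMap.mul ℂ 𝔸).flip ((I * z) • K) := by
    ext y
    simp only [_root_.smul_apply, hL, _root_.add_apply, ContinuousLinearMap.mul_apply',
      ContinuousLinearMap.flip_apply, smul_mul_assoc, mul_smul_comm, smul_sub, smul_smul]
    module
  rw [hdecomp, exp_mul_add_flip_mul_apply]

variable [StarRing 𝔸] [ContinuousStar 𝔸] [StarModule ℂ 𝔸]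

theorem IsSelfAdjoint.star_exp_neg_I_mul_smul {K : 𝔸} (hK : IsSelfAdjoint K) (t : ℝ) :
    star (NormedSpace.exp ((-(I * t)) • K)) = NormedSpace.exp ((I * t) • K) := by
  rw [star_exp, star_smul, hK.star_eq]
  simp

theorem IsSelfAdjoint.exp_neg_I_mul_smul_mem_unitary [CompleteSpace 𝔸] {K : 𝔸}
    (hK : IsSelfAdjoint K) (t : ℝ) : NormedSpace.exp ((-(I * t)) • K) ∈ unitary 𝔸 := by
  let _ := NormedAlgebra.restrictScalars ℚ ℂ 𝔸
  refine exp_mem_unitary_of_mem_skewAdjoint ?_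
  rw [skewAdjoint.mem_iff, star_smul, hK.star_eq]
  simp
end Hamiltonian

section Derivative
variable {𝔸 : Type*} [NormedRing 𝔸] [NormedAlgebra ℝ 𝔸] [CompleteSpace 𝔸]

theorem hasDerivAt_exp_smul_zero (x : 𝔸) :
    HasDerivAt (fun t : ℝ => exp (t • x)) x 0 := by
  simpa using hasDerivAt_exp_smul_const x (0 : ℝ)

theorem hasDerivAt_exp_smul_mul_mul_exp_smul_zero (a b c : 𝔸) :
    HasDerivAt (fun t : ℝ => exp (t • a) * c * exp (t • b)) (a * c + c * b) 0 := by
  simpa using ((hasDerivAt_exp_smul_zero a).mul_const c).fun_mul (hasDerivAt_exp_smul_zero b)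

theorem hasDerivAt_exp_smul_apply_zero {E : Type*} [NormedAddCommGroup E] [NormedSpace ℂ E]
    [CompleteSpace E] (L : E →L[ℂ] E) (x : E) :
    HasDerivAt (fun t : ℝ => exp (t • L) x) (L x) 0 :=
  ((ContinuousLinearMap.apply ℂ E x).restrictScalars ℝ).hasFDerivAt.comp_hasDerivAt 0
    (hasDerivAt_exp_smul_zero L)
end Derivative

section PartialTrace
variable {n m : ℕ}

theorem ptrace2_mul_kronecker_one (M : Matrix (Fin n × Fin m) (Fin n × Fin m) ℂ)
    (ρ : Matrix (Fin n) (Fin n) ℂ) :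
    ptrace2 (M * (ρ ⊗ₖ (1 : Matrix (Fin m) (Fin m) ℂ))) = ptrace2 M * ρ := by
  ext i j
  simp only [ptrace2, Matrix.mul_apply, Matrix.kroneckerMap_apply, Matrix.one_apply, mul_ite,
    mul_one, mul_zero, Fintype.sum_prod_type, Finset.sum_ite_eq', Finset.mem_univ, ↓reduceIte,
    Matrix.of_apply, Finset.sum_mul]
  exact Finset.sum_comm

theorem ptrace2_kronecker_one_mul (M : Matrix (Fin n × Fin m) (Fin n × Fin m) ℂ)
    (ρ : Matrix (Fin n) (Fin n) ℂ) :
    ptrace2 ((ρ ⊗ₖ (1 : Matrix (Fin m) (Fin m) ℂ)) * M) = ρ * ptrace2 M := by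
  ext i j
  simp only [ptrace2, Matrix.mul_apply, Matrix.kroneckerMap_apply, Matrix.one_apply, mul_ite,
    mul_one, mul_zero, ite_mul, zero_mul, Fintype.sum_prod_type, Finset.sum_ite_eq,
    Finset.mem_univ, ↓reduceIte, Matrix.of_apply, Finset.mul_sum]
  exact Finset.sum_comm

theorem ptrace2_one_kronecker_mul_comm (E : Matrix (Fin m) (Fin m) ℂ)
    (M : Matrix (Fin n × Fin m) (Fin n × Fin m) ℂ) :
    ptrace2 (((1 : Matrix (Fin n) (Fin n) ℂ) ⊗ₖ E) * M) = ptrace2 (M * (1 ⊗ₖ E)) := by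
  ext i j
  simp only [ptrace2, Matrix.mul_apply, Matrix.kroneckerMap_apply, Matrix.one_apply, ite_mul,
    one_mul, zero_mul, Fintype.sum_prod_type, Finset.sum_ite_irrel, Finset.sum_const_zero,
    Finset.sum_ite_eq, Finset.mem_univ, ↓reduceIte, Matrix.of_apply, mul_ite, mul_zero,
    Finset.sum_ite_eq']
  rw [Finset.sum_comm]
  simp only [mul_comm]

theorem ptrace2_conjTranspose (M : Matrix (Fin n × Fin m) (Fin n × Fin m) ℂ) :
    (ptrace2 M)ᴴ = ptrace2 Mᴴ := by
  ext i j
  simp [ptrace2]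

theorem ptrace2_mul_kronecker (M : Matrix (Fin n × Fin m) (Fin n × Fin m) ℂ)
    (ρ : Matrix (Fin n) (Fin n) ℂ) (E : Matrix (Fin m) (Fin m) ℂ) :
    ptrace2 (M * (ρ ⊗ₖ E)) = ptrace2 (M * (1 ⊗ₖ E)) * ρ := by
  rw [← ptrace2_mul_kronecker_one, Matrix.mul_assoc, ← Matrix.mul_kronecker_mul, Matrix.one_mul,
    Matrix.mul_one]

theorem ptrace2_kronecker_mul (M : Matrix (Fin n × Fin m) (Fin n × Fin m) ℂ)
    (ρ : Matrix (Fin n) (Fin n) ℂ) (E : Matrix (Fin m) (Fin m) ℂ) :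
    ptrace2 ((ρ ⊗ₖ E) * M) = ρ * ptrace2 (M * (1 ⊗ₖ E)) := by
  rw [← ptrace2_one_kronecker_mul_comm, ← ptrace2_kronecker_one_mul, ← Matrix.mul_assoc,
    ← Matrix.mul_kronecker_mul, Matrix.mul_one, Matrix.one_mul]

theorem ptrace2_add (M N : Matrix (Fin n × Fin m) (Fin n × Fin m) ℂ) :
    ptrace2 (M + N) = ptrace2 M + ptrace2 N := by
  ext
  simp [ptrace2, Finset.sum_add_distrib]

theorem ptrace2_smul (c : ℂ) (M : Matrix (Fin n × Fin m) (Fin n × Fin m) ℂ) :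
    ptrace2 (c • M) = c • ptrace2 M := by
  ext
  simp [ptrace2, Finset.mul_sum]

def ptrace2LinearMap (n m : ℕ) :
    Matrix (Fin n × Fin m) (Fin n × Fin m) ℂ →ₗ[ℂ] Matrix (Fin n) (Fin n) ℂ where
  toFun := ptrace2
  map_add' := ptrace2_add
  map_smul' := ptrace2_smul

theorem ptrace2_sub (M N : Matrix (Fin n × Fin m) (Fin n × Fin m) ℂ) :
    ptrace2 (M - N) = ptrace2 M - ptrace2 N :=
  map_sub (ptrace2LinearMap n m) M N

theorem HasDerivAt.ptrace2 {f : ℝ → Matrix (Fin n × Fin m) (Fin n × Fin m) ℂ}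
    {f' : Matrix (Fin n × Fin m) (Fin n × Fin m) ℂ} {t : ℝ} (hf : HasDerivAt f f' t) :
    HasDerivAt (fun s => _root_.ptrace2 (f s)) (_root_.ptrace2 f') t :=
  ((ptrace2LinearMap n m).toContinuousLinearMap.restrictScalars ℝ).hasFDerivAt.comp_hasDerivAt
    t hf

def effectiveHamiltonian (H : Matrix (Fin n × Fin m) (Fin n × Fin m) ℂ)
    (ρE : Matrix (Fin m) (Fin m) ℂ) : Matrix (Fin n) (Fin n) ℂ :=
  ptrace2 (H * (1 ⊗ₖ ρE))

theorem isHermitian_effectiveHamiltonian {H : Matrix (Fin n × Fin m) (Fin n × Fin m) ℂ}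
    {ρE : Matrix (Fin m) (Fin m) ℂ} (hH : H.IsHermitian) (hρE : ρE.IsHermitian) :
    (effectiveHamiltonian H ρE).IsHermitian := by
  rw [Matrix.IsHermitian, effectiveHamiltonian, ptrace2_conjTranspose, Matrix.conjTranspose_mul,
    Matrix.conjTranspose_kronecker, Matrix.conjTranspose_one, hH.eq, hρE.eq,
    ptrace2_one_kronecker_mul_comm]

end PartialTrace

-- As in the statement: plain `→L[ℂ]` would use the product topology, not the Frobenius norm.
local notation "𝓛[" ι "]" => @ContinuousLinearMap ℂ ℂ _ _ (RingHom.id ℂ) (Matrix ι ι ℂ) PseudoMetricSpace.toUniformSpace.toTopologicalSpace _ (Matrix ι ι ℂ) PseudoMetricSpace.toUniformSpace.toTopologicalSpace _ _ _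

section ReducedDynamics
variable {n m : ℕ}

theorem hasDerivAt_ptrace2_exp_conj (H C : Matrix (Fin n × Fin m) (Fin n × Fin m) ℂ) :
    HasDerivAt (fun t : ℝ => ptrace2 (exp ((-(I * t)) • H) * C * exp ((I * t) • H)))
      (ptrace2 (I • (C * H - H * C))) 0 := by
  have hsmul : ∀ (z : ℂ) (t : ℝ), (z * t) • H = t • (z • H) := fun z t => by
    rw [mul_comm, ← smul_smul, Complex.coe_smul]
  have hcommutator : (-I) • H * C + C * (I • H) = I • (C * H - H * C) := by
    simp only [Matrix.smul_mul, Matrix.mul_smul]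
    module
  let _ : NormedRing (Matrix (Fin n × Fin m) (Fin n × Fin m) ℂ) := Matrix.frobeniusNormedRing
  let _ : NormedAlgebra ℝ (Matrix (Fin n × Fin m) (Fin n × Fin m) ℂ) :=
    Matrix.frobeniusNormedAlgebra
  have h := (hasDerivAt_exp_smul_mul_mul_exp_smul_zero ((-I) • H) (I • H) C).ptrace2
  simp only [← hsmul, neg_mul] at h
  rw [← hcommutator]
  exact h

theorem eq_commutator_of_exp_smul_apply_eq_ptrace2
    (H : Matrix (Fin n × Fin m) (Fin n × Fin m) ℂ) (ρE : Matrix (Fin m) (Fin m) ℂ)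
    (L : 𝓛[Fin n])
    (hdyn : ∀ t : ℝ, 0 ≤ t → ∀ ρ : Matrix (Fin n) (Fin n) ℂ,
      exp (t • L) ρ = ptrace2 (exp ((-(I * t)) • H) * (ρ ⊗ₖ ρE) * exp ((I * t) • H)))
    (ρ : Matrix (Fin n) (Fin n) ℂ) :
    L ρ = I • (ρ * effectiveHamiltonian H ρE - effectiveHamiltonian H ρE * ρ) := by
  have hsemigroup : HasDerivAt (fun t : ℝ => exp (t • L) ρ) (L ρ) 0 :=
    hasDerivAt_exp_smul_apply_zero L ρ
  have hreduced := hasDerivAt_ptrace2_exp_conj H (ρ ⊗ₖ ρE)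
  have hderiv : L ρ = ptrace2 (I • ((ρ ⊗ₖ ρE) * H - H * (ρ ⊗ₖ ρE))) :=
    (uniqueDiffOn_Ici 0 0 Set.self_mem_Ici).eq_deriv _ hsemigroup.hasDerivWithinAt
      (hreduced.hasDerivWithinAt.congr (fun t ht => hdyn t ht ρ) (hdyn 0 le_rfl ρ))
  rw [hderiv, ptrace2_smul, ptrace2_sub, ptrace2_kronecker_mul, ptrace2_mul_kronecker H ρ]
  rfl
end ReducedDynamics

theorem Matrix.IsHermitian.exists_unitary_exp_smul_apply_eq_conj {ι : Type*} [Fintype ι]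
    [DecidableEq ι] {K : Matrix ι ι ℂ} (hK : K.IsHermitian) {L : 𝓛[ι]}
    (hL : ∀ ρ, L ρ = I • (ρ * K - K * ρ)) (t : ℝ) :
    ∃ U ∈ Matrix.unitaryGroup ι ℂ,
      ∀ ρ, NormedSpace.exp (t • L) ρ = U * ρ * star U := by
  let _ : NormedRing (Matrix ι ι ℂ) := Matrix.frobeniusNormedRing
  let _ : NormedAlgebra ℂ (Matrix ι ι ℂ) := Matrix.frobeniusNormedAlgebra
  refine ⟨_, hK.isSelfAdjoint.exp_neg_I_mul_smul_mem_unitary t, fun ρ => ?_⟩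
  rw [hK.isSelfAdjoint.star_exp_neg_I_mul_smul, ← Complex.coe_smul t L]
  exact exp_smul_apply_of_eq_commutator hL t ρ

theorem exact_lindblad_dynamics_is_unitary_general {n m : ℕ}
    (H : Matrix (Fin n × Fin m) (Fin n × Fin m) ℂ) (hH : H.IsHermitian)
    (ρE : Matrix (Fin m) (Fin m) ℂ) (hρE : ρE.PosSemidef)
    (L : @ContinuousLinearMap ℂ ℂ _ _ (RingHom.id ℂ) (Matrix (Fin n) (Fin n) ℂ)
      PseudoMetricSpace.toUniformSpace.toTopologicalSpace _ (Matrix (Fin n) (Fin n) ℂ)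
      PseudoMetricSpace.toUniformSpace.toTopologicalSpace _ _ _)
    (hdyn : ∀ t : ℝ, 0 ≤ t → ∀ ρ : Matrix (Fin n) (Fin n) ℂ,
      NormedSpace.exp (t • L) ρ =
        ptrace2 (NormedSpace.exp ((-(Complex.I * (t : ℂ))) • H) * (ρ ⊗ₖ ρE) *
          NormedSpace.exp ((Complex.I * (t : ℂ)) • H))) :
    (∃ H' : Matrix (Fin n) (Fin n) ℂ, H'.IsHermitian ∧
      ∀ ρ : Matrix (Fin n) (Fin n) ℂ, L ρ = Complex.I • (ρ * H' - H' * ρ)) ∧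
    (∀ t : ℝ, 0 ≤ t → ∃ U : Matrix (Fin n) (Fin n) ℂ,
      Uᴴ * U = 1 ∧ U * Uᴴ = 1 ∧
      ∀ ρ : Matrix (Fin n) (Fin n) ℂ, NormedSpace.exp (t • L) ρ = U * ρ * Uᴴ) := by
  have hL := eq_commutator_of_exp_smul_apply_eq_ptrace2 H ρE L hdyn
  have hHermitian := isHermitian_effectiveHamiltonian hH hρE.isHermitian
  refine ⟨⟨_, hHermitian, hL⟩, fun t _ => ?_⟩
  obtain ⟨U, hU, hconj⟩ := hHermitian.exists_unitary_exp_smul_apply_eq_conj hL t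
  exact ⟨U, Matrix.mem_unitaryGroup_iff'.mp hU, Matrix.mem_unitaryGroup_iff.mp hU, hconj⟩

/-- **Exact dynamics with a Lindblad master equation (finite-dimensional environment).**
If a semigroup `exp (t • L)` reproduces, for all `t ≥ 0`, the exact reduced dynamics of a
finite-dimensional global Hamiltonian evolution, then `L` is a Hamiltonian generator
`ρ ↦ i (ρ H̃ − H̃ ρ)`; in particular each `exp (t • L)` is a unitary conjugation. -/
theorem exact_lindblad_dynamics_is_unitary {n m : ℕ} (hn : 1 ≤ n) (hm : 1 ≤ m)
    (H : Matrix (Fin n × Fin m) (Fin n × Fin m) ℂ) (hH : H.IsHermitian)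
    (ρE : Matrix (Fin m) (Fin m) ℂ) (hρE : ρE.PosSemidef) (hρEtr : ρE.trace = 1)
    (L : @ContinuousLinearMap ℂ ℂ _ _ (RingHom.id ℂ) (Matrix (Fin n) (Fin n) ℂ)
      PseudoMetricSpace.toUniformSpace.toTopologicalSpace _ (Matrix (Fin n) (Fin n) ℂ)
      PseudoMetricSpace.toUniformSpace.toTopologicalSpace _ _ _)
    (hdyn : ∀ t : ℝ, 0 ≤ t → ∀ ρ : Matrix (Fin n) (Fin n) ℂ,
      NormedSpace.exp (t • L) ρ =
        ptrace2 (NormedSpace.exp ((-(Complex.I * (t : ℂ))) • H) * (ρ ⊗ₖ ρE) *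
          NormedSpace.exp ((Complex.I * (t : ℂ)) • H))) :
    (∃ H' : Matrix (Fin n) (Fin n) ℂ, H'.IsHermitian ∧
      ∀ ρ : Matrix (Fin n) (Fin n) ℂ, L ρ = Complex.I • (ρ * H' - H' * ρ)) ∧
    (∀ t : ℝ, 0 ≤ t → ∃ U : Matrix (Fin n) (Fin n) ℂ,
      Uᴴ * U = 1 ∧ U * Uᴴ = 1 ∧
      ∀ ρ : Matrix (Fin n) (Fin n) ℂ, NormedSpace.exp (t • L) ρ = U * ρ * Uᴴ) :=
  exact_lindblad_dynamics_is_unitary_general H hH ρE hρE L hdyn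
end
end

section
/- Let Φ be a linear map on Matrix (Fin n) (Fin n) ℂ that is trace preserving (trace(Φ(X)) = trace(X) for all X) and hermiticity preserving. Then Φ is a positive map, i.e. Φ maps every positive semidefinite matrix to a positive semidefinite matrix, if and only if ‖Φ(Δ)‖₁ ≤ ‖Δ‖₁ for every Hermitian matrix Δ ∈ Matrix (Fin n) (Fin n) ℂ. -/
/-!
The trace norm of a Hermitian matrix `Δ` is `∑ |λᵢ|`, and it is the least value of
`tr P + tr N` over decompositions `Δ = P - N` into positive semidefinite parts: in the
eigenbasis of `Δ`, `λᵢ = Pᵢᵢ - Nᵢᵢ` with `Pᵢᵢ, Nᵢᵢ ≥ 0`, and the Jordan decomposition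
`Δ = Δ⁺ - Δ⁻` attains the bound. A positive trace-preserving map sends the Jordan
decomposition of `Δ` to a decomposition of `Φ Δ` with the same total trace, hence contracts.
Conversely, for `X ≥ 0` contractivity gives `‖Φ X‖₁ ≤ ‖X‖₁ = tr X = tr (Φ X)`, and a Hermitian
matrix whose trace norm does not exceed its trace has no negative eigenvalue.
-/

open scoped ComplexOrder Matrix

noncomputable section

/-- The trace norm of a complex square matrix: the trace of the positive semidefinite
square root of `Aᴴ * A` (a real number). -/
def traceNorm {n : ℕ} (A : Matrix (Fin n) (Fin n) ℂ) : ℝ :=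
  (((Matrix.posSemidef_conjTranspose_mul_self A).1.eigenvectorUnitary.1 *
      Matrix.diagonal (((↑) : ℝ → ℂ) ∘ (√·) ∘ (Matrix.posSemidef_conjTranspose_mul_self A).1.eigenvalues) *
      (star (Matrix.posSemidef_conjTranspose_mul_self A).1.eigenvectorUnitary : Matrix (Fin n) (Fin n) ℂ)).trace).re

namespace Matrix

open Unitary RCLike

variable {𝕜 n : Type*} [RCLike 𝕜] [Fintype n] [DecidableEq n]

theorem trace_conjStarAlgAut (U : unitary (Matrix n n 𝕜)) (A : Matrix n n 𝕜) :
    (conjStarAlgAut 𝕜 _ U A).trace = A.trace := by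
  rw [conjStarAlgAut_apply, trace_mul_cycle, coe_star_mul_self, one_mul]

theorem PosSemidef.conjStarAlgAut {A : Matrix n n 𝕜} (hA : A.PosSemidef)
    (U : unitary (Matrix n n 𝕜)) : (conjStarAlgAut 𝕜 _ U A).PosSemidef :=
  hA.mul_mul_conjTranspose_same (U : Matrix n n 𝕜)

theorem IsHermitian.trace_cfc {A : Matrix n n 𝕜} (hA : A.IsHermitian) (f : ℝ → ℝ) :
    (cfc f A).trace = ∑ i, (f (hA.eigenvalues i) : 𝕜) := by
  rw [hA.cfc_eq, IsHermitian.cfc, trace_conjStarAlgAut, trace_diagonal]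
  rfl

open scoped MatrixOrder in
theorem IsHermitian.re_trace_abs {A : Matrix n n 𝕜} (hA : A.IsHermitian) :
    re (CFC.abs A).trace = ∑ i, |hA.eigenvalues i| := by
  rw [CFC.abs_eq_cfc_norm A hA.isSelfAdjoint, hA.trace_cfc, map_sum]
  simp

theorem IsHermitian.sum_abs_eigenvalues_le_of_eq_sub {M A B : Matrix n n 𝕜}
    (hM : M.IsHermitian) (hA : A.PosSemidef) (hB : B.PosSemidef) (h : M = A - B) :
    ∑ i, |hM.eigenvalues i| ≤ re A.trace + re B.trace := by
  set conj := conjStarAlgAut 𝕜 _ (star hM.eigenvectorUnitary)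
  have hdiag : conj A - conj B = diagonal (ofReal ∘ hM.eigenvalues) := by
    rw [← map_sub, ← h, hM.conjStarAlgAut_star_eigenvectorUnitary]
  rw [← trace_conjStarAlgAut (star hM.eigenvectorUnitary) A,
    ← trace_conjStarAlgAut (star hM.eigenvectorUnitary) B, trace, trace, map_sum, map_sum,
    ← Finset.sum_add_distrib]
  refine Finset.sum_le_sum fun i _ => ?_
  dsimp only [diag]
  have hdiff : re (conj A i i) - re (conj B i i) = hM.eigenvalues i := by
    simpa using congrArg (fun X => re (X i i)) hdiag
  have ha : 0 ≤ re (conj A i i) := (nonneg_iff.mp (hA.conjStarAlgAut _).diag_nonneg).1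
  have hb : 0 ≤ re (conj B i i) := (nonneg_iff.mp (hB.conjStarAlgAut _).diag_nonneg).1
  exact abs_le.mpr ⟨by linarith, by linarith⟩

end Matrix

section TraceNorm

open Matrix
open scoped MatrixOrder

variable {n : ℕ}

theorem traceNorm_eq_re_trace_abs (A : Matrix (Fin n) (Fin n) ℂ) :
    traceNorm A = (CFC.abs A).trace.re := by
  have hA := posSemidef_conjTranspose_mul_self A
  rw [CFC.abs, star_eq_conjTranspose, CFC.sqrt_eq_real_sqrt _ (nonneg_iff_posSemidef.mpr hA),
    cfcₙ_eq_cfc, hA.1.cfc_eq]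
  rfl

theorem traceNorm_eq_sum_abs_eigenvalues {M : Matrix (Fin n) (Fin n) ℂ} (hM : M.IsHermitian) :
    traceNorm M = ∑ i, |hM.eigenvalues i| := by
  rw [traceNorm_eq_re_trace_abs]
  exact hM.re_trace_abs

theorem traceNorm_of_posSemidef {X : Matrix (Fin n) (Fin n) ℂ} (hX : X.PosSemidef) :
    traceNorm X = X.trace.re := by
  rw [traceNorm_eq_re_trace_abs, CFC.abs_of_nonneg X (nonneg_iff_posSemidef.mpr hX)]

theorem traceNorm_le_of_eq_sub {M A B : Matrix (Fin n) (Fin n) ℂ} (hM : M.IsHermitian)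
    (hA : A.PosSemidef) (hB : B.PosSemidef) (h : M = A - B) :
    traceNorm M ≤ A.trace.re + B.trace.re :=
  traceNorm_eq_sum_abs_eigenvalues hM ▸ hM.sum_abs_eigenvalues_le_of_eq_sub hA hB h

theorem Matrix.IsHermitian.exists_posSemidef_sub_eq_traceNorm {Δ : Matrix (Fin n) (Fin n) ℂ}
    (hΔ : Δ.IsHermitian) :
    ∃ P N : Matrix (Fin n) (Fin n) ℂ, P.PosSemidef ∧ N.PosSemidef ∧ Δ = P - N ∧
      P.trace.re + N.trace.re = traceNorm Δ := by
  refine ⟨Δ⁺, Δ⁻, nonneg_iff_posSemidef.mp (CFC.posPart_nonneg Δ),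
    nonneg_iff_posSemidef.mp (CFC.negPart_nonneg Δ),
    (CFC.posPart_sub_negPart Δ hΔ.isSelfAdjoint).symm, ?_⟩
  rw [traceNorm_eq_re_trace_abs, ← CFC.posPart_add_negPart Δ hΔ.isSelfAdjoint, trace_add,
    Complex.add_re]

theorem Matrix.IsHermitian.posSemidef_of_traceNorm_le_re_trace
    {M : Matrix (Fin n) (Fin n) ℂ} (hM : M.IsHermitian) (h : traceNorm M ≤ M.trace.re) :
    M.PosSemidef := by
  rw [traceNorm_eq_sum_abs_eigenvalues hM, hM.trace_eq_sum_eigenvalues, Complex.re_sum] at h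
  have hle : ∀ i ∈ Finset.univ, hM.eigenvalues i ≤ |hM.eigenvalues i| :=
    fun i _ => le_abs_self _
  have heq := (Finset.sum_eq_sum_iff_of_le hle).mp (le_antisymm (Finset.sum_le_sum hle) h)
  exact hM.posSemidef_iff_eigenvalues_nonneg.mpr fun i =>
    abs_eq_self.mp (heq i (Finset.mem_univ i)).symm

end TraceNorm

/-- **Contractivity of positive trace-preserving maps.** A trace-preserving,
hermiticity-preserving linear map on complex matrices is positive if and only if it is
contractive with respect to the trace norm on Hermitian matrices. -/
theorem positive_iff_traceNorm_contractive {n : ℕ}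
    (Φ : Matrix (Fin n) (Fin n) ℂ →ₗ[ℂ] Matrix (Fin n) (Fin n) ℂ)
    (hTP : ∀ X, (Φ X).trace = X.trace)
    (hHP : ∀ X, Φ Xᴴ = (Φ X)ᴴ) :
    (∀ X : Matrix (Fin n) (Fin n) ℂ, X.PosSemidef → (Φ X).PosSemidef) ↔
      (∀ Δ : Matrix (Fin n) (Fin n) ℂ, Δ.IsHermitian → traceNorm (Φ Δ) ≤ traceNorm Δ) := by
  have hΦ : ∀ Δ : Matrix (Fin n) (Fin n) ℂ, Δ.IsHermitian → (Φ Δ).IsHermitian := fun Δ hΔ => by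
    rw [Matrix.IsHermitian, ← hHP, hΔ.eq]
  constructor
  · intro hpos Δ hΔ
    obtain ⟨P, N, hP, hN, rfl, htr⟩ := hΔ.exists_posSemidef_sub_eq_traceNorm
    calc traceNorm (Φ (P - N)) ≤ (Φ P).trace.re + (Φ N).trace.re :=
          traceNorm_le_of_eq_sub (hΦ _ hΔ) (hpos P hP) (hpos N hN) (map_sub Φ P N)
      _ = traceNorm (P - N) := by rw [hTP, hTP, htr]
  · intro hcontr X hX
    refine (hΦ X hX.1).posSemidef_of_traceNorm_le_re_trace ?_
    calc traceNorm (Φ X) ≤ traceNorm X := hcontr X hX.1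
      _ = (Φ X).trace.re := by rw [traceNorm_of_posSemidef hX, hTP]
end
end

section
/- Let d ≥ 2 and let L be a linear map on Matrix (Fin d) (Fin d) ℂ that is hermiticity preserving and satisfies trace(L(X)) = 0 for all X. Let F₁, …, F_{d²−1} be traceless matrices (trace(F_i) = 0) that together with F₀ = (1/√d)·1 form an orthonormal basis of Matrix (Fin d) (Fin d) ℂ for the Hilbert–Schmidt inner product ⟨A, B⟩ = trace(Aᴴ*B). Then there exist a Hermitian matrix H ∈ Matrix (Fin d) (Fin d) ℂ and a Hermitian matrix G ∈ Matrix (Fin (d²−1)) (Fin (d²−1)) ℂ such that for all ρ: L(ρ) = i(ρ*H − H*ρ) + Σ_{i,j} G i j • (F_i*ρ*F_jᴴ − (1/2)(F_jᴴ*F_i*ρ + ρ*F_jᴴ*F_i)). -/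
open scoped Matrix

noncomputable section

/-! Expanding the matrix units in the orthonormal basis `E₀ = d^{-1/2} • 1, Eᵢ = Fᵢ` writes any
linear map as `L ρ = ∑ c_{αβ} E_α ρ E_βᴴ`, and the coefficient matrix `c` is Hermitian because `L`
preserves Hermiticity. The terms involving `E₀` combine into `A ρ + ρ Aᴴ`. Trace annihilation
forces `A + Aᴴ = -∑ c_{ij} F_jᴴ F_i`, so only the anti-Hermitian part of `A` survives, and it
yields the Hamiltonian `H = (i/2)(A - Aᴴ)`. -/

namespace Matrix

variable {n ι : Type*} [DecidableEq n]

theorem span_range_option_elim {s : ℂ} (hs : s ≠ 0) {F : ι → Matrix n n ℂ}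
    (hspan : Submodule.span ℂ (insert 1 (Set.range F)) = ⊤) :
    Submodule.span ℂ (Set.range fun o : Option ι => o.elim (s • 1) F) = ⊤ := by
  rw [Option.range_elim, Submodule.span_insert, Submodule.span_singleton_smul_eq hs.isUnit,
    ← Submodule.span_insert, hspan]

variable [Fintype n]

theorem linearMap_apply_eq_sum_single_mul_mul_single {R : Type*} [CommSemiring R]
    (L : Matrix n n R →ₗ[R] Matrix n n R) (ρ : Matrix n n R) :
    L ρ = ∑ i, ∑ j, ∑ k, ∑ l, L (single i j 1) k l • (single k i 1 * ρ * single j l 1) := by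
  conv_lhs => rw [matrix_eq_sum_single ρ]
  simp only [single_mul_mul_single, one_mul, mul_one, map_sum]
  refine Finset.sum_congr rfl fun i _ => Finset.sum_congr rfl fun j _ => ?_
  rw [show single i j (ρ i j) = ρ i j • single i j 1 by simp, map_smul,
    matrix_eq_sum_single (ρ i j • L (single i j 1))]
  simp [smul_single, mul_comm]

/-- The process matrix (χ-matrix) of `L` in the operator basis `E`. -/
def chiMatrix (E : ι → Matrix n n ℂ) (L : Matrix n n ℂ →ₗ[ℂ] Matrix n n ℂ) :
    Matrix ι ι ℂ :=
  of fun α β => ∑ i, ∑ j, ∑ k, ∑ l, L (single i j 1) k l * (star (E α k i) * E β l j)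

theorem isHermitian_chiMatrix (E : ι → Matrix n n ℂ)
    {L : Matrix n n ℂ →ₗ[ℂ] Matrix n n ℂ} (hL : ∀ X, L Xᴴ = (L X)ᴴ) :
    (chiMatrix E L).IsHermitian := by
  have hL' : ∀ i j k l, star (L (single i j 1) k l) = L (single j i 1) l k := fun i j k l => by
    rw [← conjTranspose_apply, ← hL, conjTranspose_single, star_one]
  ext α β
  simp only [conjTranspose_apply, chiMatrix, of_apply, star_sum, star_mul', hL', star_star]
  rw [Finset.sum_comm]
  refine Finset.sum_congr rfl fun i _ => Finset.sum_congr rfl fun j _ => ?_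
  rw [Finset.sum_comm]
  refine Finset.sum_congr rfl fun k _ => Finset.sum_congr rfl fun l _ => ?_
  ring

theorem sum_trace_conjTranspose_mul_smul_eq_self [Fintype ι] [DecidableEq ι] {E : ι → Matrix n n ℂ}
    (hE : ∀ α β, ((E α)ᴴ * E β).trace = if α = β then 1 else 0)
    (hspan : Submodule.span ℂ (Set.range E) = ⊤) (X : Matrix n n ℂ) :
    ∑ α, ((E α)ᴴ * X).trace • E α = X := by
  have h : ∑ α, ((traceLinearMap n ℂ ℂ ∘ₗ LinearMap.mulLeft ℂ (E α)ᴴ).smulRight (E α))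
      = LinearMap.id :=
    LinearMap.ext_on_range hspan fun β => by simp [hE]
  simpa using LinearMap.congr_fun h X

theorem single_one_eq_sum_star_smul [Fintype ι] [DecidableEq ι] {E : ι → Matrix n n ℂ}
    (hE : ∀ α β, ((E α)ᴴ * E β).trace = if α = β then 1 else 0)
    (hspan : Submodule.span ℂ (Set.range E) = ⊤) (i j : n) :
    single i j 1 = ∑ α, star (E α i j) • E α := by
  conv_lhs => rw [← sum_trace_conjTranspose_mul_smul_eq_self hE hspan (single i j 1)]
  simp [trace_mul_single]

theorem single_mul_mul_single_eq_sum [Fintype ι] [DecidableEq ι] {E : ι → Matrix n n ℂ}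
    (hE : ∀ α β, ((E α)ᴴ * E β).trace = if α = β then 1 else 0)
    (hspan : Submodule.span ℂ (Set.range E) = ⊤) (ρ : Matrix n n ℂ) (i j k l : n) :
    single k i 1 * ρ * single j l 1
      = ∑ α, ∑ β, (star (E α k i) * E β l j) • (E α * ρ * (E β)ᴴ) := by
  have hjl : single j l (1 : ℂ) = ∑ β, E β l j • (E β)ᴴ := by
    simpa [conjTranspose_sum] using
      congrArg conjTranspose (single_one_eq_sum_star_smul hE hspan l j)
  rw [single_one_eq_sum_star_smul hE hspan k i, hjl, Finset.sum_mul, Finset.sum_mul]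
  simp only [Finset.mul_sum, smul_mul_assoc, mul_smul_comm, smul_smul, mul_assoc,
    mul_comm (E _ l j)]

theorem linearMap_apply_eq_sum_chiMatrix_smul [Fintype ι] [DecidableEq ι] {E : ι → Matrix n n ℂ}
    (hE : ∀ α β, ((E α)ᴴ * E β).trace = if α = β then 1 else 0)
    (hspan : Submodule.span ℂ (Set.range E) = ⊤) (L : Matrix n n ℂ →ₗ[ℂ] Matrix n n ℂ)
    (ρ : Matrix n n ℂ) :
    L ρ = ∑ α, ∑ β, chiMatrix E L α β • (E α * ρ * (E β)ᴴ) := by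
  rw [linearMap_apply_eq_sum_single_mul_mul_single L ρ]
  simp only [single_mul_mul_single_eq_sum hE hspan, chiMatrix, of_apply, Finset.sum_smul,
    Finset.smul_sum, smul_smul]
  simp only [Finset.sum_comm (s := (Finset.univ : Finset n)) (t := (Finset.univ : Finset ι))]

theorem trace_conjTranspose_mul_option_elim [DecidableEq ι] {s : ℂ}
    (hs : star s * s * Fintype.card n = 1) {F : ι → Matrix n n ℂ}
    (hF_traceless : ∀ i, (F i).trace = 0)
    (hF : ∀ i j, ((F i)ᴴ * F j).trace = if i = j then 1 else 0) (α β : Option ι) :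
    ((α.elim (s • 1) F)ᴴ * β.elim (s • 1) F).trace = if α = β then 1 else 0 := by
  rcases α with _ | i <;> rcases β with _ | j
  · simpa [smul_smul, mul_comm s] using hs
  · simp [hF_traceless]
  · simp [trace_conjTranspose, hF_traceless]
  · simpa using hF i j

theorem exists_sum_smul_option_elim_eq [Fintype ι] {s : ℂ} (F : ι → Matrix n n ℂ)
    {c : Matrix (Option ι) (Option ι) ℂ} (hc : c.IsHermitian) :
    ∃ A : Matrix n n ℂ, ∀ ρ,
      ∑ α, ∑ β, c α β • (α.elim (s • 1) F * ρ * (β.elim (s • 1) F)ᴴ)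
        = A * ρ + ρ * Aᴴ + ∑ i, ∑ j, c (some i) (some j) • (F i * ρ * (F j)ᴴ) := by
  have hc' : ∀ α β, star (c α β) = c β α := fun α β => by rw [← conjTranspose_apply, hc]
  refine ⟨∑ i, (star s * c (some i) none) • F i + (star s * s * c none none / 2) • 1,
    fun ρ => ?_⟩
  simp only [Fintype.sum_option, Option.elim, conjTranspose_add, conjTranspose_sum,
    conjTranspose_smul, star_mul', star_div₀, hc', star_star, conjTranspose_one, star_ofNat]
  simp only [add_mul, mul_add, Finset.sum_mul, Finset.mul_sum, smul_mul_assoc, mul_smul_comm,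
    one_mul, mul_one, Finset.sum_add_distrib, smul_smul]
  simp only [mul_comm (c _ _), mul_comm s (star s)]
  module

theorem add_conjTranspose_eq_neg_sum_of_trace_eq_zero [Fintype ι]
    {L : Matrix n n ℂ → Matrix n n ℂ} (hTr : ∀ X, (L X).trace = 0) {A : Matrix n n ℂ}
    {F : ι → Matrix n n ℂ} {G : Matrix ι ι ℂ}
    (hL : ∀ ρ, L ρ = A * ρ + ρ * Aᴴ + ∑ i, ∑ j, G i j • (F i * ρ * (F j)ᴴ)) :
    A + Aᴴ = -∑ i, ∑ j, G i j • ((F j)ᴴ * F i) := by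
  rw [← add_eq_zero_iff_eq_neg, ext_iff_trace_mul_right]
  intro ρ
  have h := hTr ρ
  rw [hL] at h
  simpa [add_mul, Finset.sum_mul, trace_sum, trace_mul_comm ρ, trace_mul_cycle (F _) ρ] using h

theorem mul_add_mul_conjTranspose_eq {A M : Matrix n n ℂ} (hA : A + Aᴴ = -M)
    (ρ : Matrix n n ℂ) :
    A * ρ + ρ * Aᴴ
      = Complex.I • (ρ * ((Complex.I / 2) • (A - Aᴴ)) - (Complex.I / 2) • (A - Aᴴ) * ρ)
        - (1 / 2 : ℂ) • (M * ρ + ρ * M) := by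
  have hI : Complex.I * (Complex.I / 2) = -(1 / 2) := by
    rw [mul_div_assoc', Complex.I_mul_I, neg_div]
  rw [eq_sub_of_add_eq' hA]
  simp only [mul_sub, sub_mul, mul_smul_comm, smul_mul_assoc, smul_sub, smul_smul, hI, neg_mul,
    mul_neg]
  module

theorem exists_isHermitian_eq_standard_form [Fintype ι]
    {L : Matrix n n ℂ → Matrix n n ℂ} (hTr : ∀ X, (L X).trace = 0) {A : Matrix n n ℂ}
    {F : ι → Matrix n n ℂ} {G : Matrix ι ι ℂ}
    (hL : ∀ ρ, L ρ = A * ρ + ρ * Aᴴ + ∑ i, ∑ j, G i j • (F i * ρ * (F j)ᴴ)) :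
    ∃ H : Matrix n n ℂ, H.IsHermitian ∧ ∀ ρ, L ρ = Complex.I • (ρ * H - H * ρ) +
      ∑ i, ∑ j, G i j •
        (F i * ρ * (F j)ᴴ - (1 / 2 : ℂ) • ((F j)ᴴ * F i * ρ + ρ * ((F j)ᴴ * F i))) := by
  refine ⟨(Complex.I / 2) • (A - Aᴴ), ?_, fun ρ => ?_⟩
  · rw [IsHermitian, conjTranspose_smul, conjTranspose_sub, conjTranspose_conjTranspose,
      ← neg_sub, smul_neg, ← neg_smul]
    congr 1
    simp [neg_div]
  · rw [hL ρ, mul_add_mul_conjTranspose_eq (add_conjTranspose_eq_neg_sum_of_trace_eq_zero hTr hL)]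
    simp only [smul_sub, Finset.sum_sub_distrib, Finset.sum_mul, Finset.mul_sum, smul_add,
      Finset.sum_add_distrib, Finset.smul_sum, smul_mul_assoc, mul_smul_comm, smul_comm (G _ _)]
    abel

end Matrix

/-- **Specific form of generators of dynamical maps.** A hermiticity-preserving linear map
that annihilates the trace can be written in the standard (pre-Lindblad) form with respect to
any traceless orthonormal basis completing the normalized identity. -/
theorem generator_standard_form {d : ℕ} (hd : 2 ≤ d)
    (L : Matrix (Fin d) (Fin d) ℂ →ₗ[ℂ] Matrix (Fin d) (Fin d) ℂ)
    (hHP : ∀ X, L Xᴴ = (L X)ᴴ)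
    (hTr : ∀ X, (L X).trace = 0)
    (F : Fin (d ^ 2 - 1) → Matrix (Fin d) (Fin d) ℂ)
    (hF_traceless : ∀ i, (F i).trace = 0)
    (hF_orthonormal : ∀ i j, ((F i)ᴴ * F j).trace = if i = j then 1 else 0)
    (hF_span : Submodule.span ℂ
        (insert (1 : Matrix (Fin d) (Fin d) ℂ) (Set.range F)) = ⊤) :
    ∃ (H : Matrix (Fin d) (Fin d) ℂ) (G : Matrix (Fin (d ^ 2 - 1)) (Fin (d ^ 2 - 1)) ℂ),
      H.IsHermitian ∧ G.IsHermitian ∧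
      ∀ ρ : Matrix (Fin d) (Fin d) ℂ,
        L ρ = Complex.I • (ρ * H - H * ρ) +
          ∑ i, ∑ j, G i j •
            (F i * ρ * (F j)ᴴ -
              (1 / 2 : ℂ) • ((F j)ᴴ * F i * ρ + ρ * ((F j)ᴴ * F i))) := by
  have hd0 : (0 : ℝ) < d := by exact_mod_cast (by omega : 0 < d)
  set s : ℂ := (((Real.sqrt d)⁻¹ : ℝ) : ℂ)
  have hs : star s * s * Fintype.card (Fin d) = 1 := by
    have : (Real.sqrt d)⁻¹ * (Real.sqrt d)⁻¹ * d = 1 := by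
      rw [← mul_inv, Real.mul_self_sqrt hd0.le, inv_mul_cancel₀ hd0.ne']
    simpa [s] using congrArg ((↑) : ℝ → ℂ) this
  have hs0 : s ≠ 0 := by simp [s, hd0.ne']
  set E : Option (Fin (d ^ 2 - 1)) → Matrix (Fin d) (Fin d) ℂ := fun o => o.elim (s • 1) F
  have hE := Matrix.trace_conjTranspose_mul_option_elim hs hF_traceless hF_orthonormal
  have hEspan := Matrix.span_range_option_elim hs0 hF_span
  have hχ := Matrix.isHermitian_chiMatrix E hHP
  obtain ⟨A, hA⟩ := Matrix.exists_sum_smul_option_elim_eq F hχ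
  obtain ⟨H, hH, hL⟩ := Matrix.exists_isHermitian_eq_standard_form hTr
    fun ρ => (Matrix.linearMap_apply_eq_sum_chiMatrix_smul hE hEspan L ρ).trans (hA ρ)
  exact ⟨H, _, hH, hχ.submatrix some, hL⟩
end
end
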